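/- arXiv:1911.00920 — 8 statements merged into one kernel-verified Lean document; each statement's English description precedes it below -/
import Mathlib

section
/- Let (X,d) be a metric space, φ : [0,∞) → [0,∞) a function with φ(0)=0, φ(t)<t for all t>0, and limsup_{s→t⁺} φ(s) < t for all t>0. Let f : X → X satisfy d(f(x),f(y)) ≤ φ(d(x,y)) for all x,y ∈ X. Then for each x ∈ X, the sequence (fⁿ(x)) is a Cauchy sequence. -/
open Filter Function

/-- From the limsup condition we get a Meir–Keeler type property. -/
lemma key_mk (φ : ℝ → ℝ) (hφ0 : φ 0 = 0) (hφlt : ∀ t > (0:ℝ), φ t < t)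
    (hφls : ∀ t > (0:ℝ), Filter.limsup φ (nhdsWithin t (Set.Ioi t)) < t) :
    ∀ ε > (0:ℝ), ∃ δ > (0:ℝ), ∀ s, 0 ≤ s → s < ε + δ → φ s < ε := by
  intro ε hε
  have hev1 : ∀ᶠ s in nhdsWithin ε (Set.Ioi ε), s < ε + 1 :=
    Filter.Eventually.filter_mono nhdsWithin_le_nhds
      (Filter.eventually_iff_exists_mem.2 ⟨Set.Iio (ε + 1), Iio_mem_nhds (by linarith),
        fun s hs => hs⟩)
  have hev2 : ∀ᶠ s in nhdsWithin ε (Set.Ioi ε), ε < s := self_mem_nhdsWithin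
  have hbdd : Filter.IsBoundedUnder (· ≤ ·) (nhdsWithin ε (Set.Ioi ε)) φ := by
    refine ⟨ε + 1, ?_⟩
    rw [Filter.eventually_map]
    filter_upwards [hev1, hev2] with s hs1 hs2
    exact le_of_lt ((hφlt s (hε.trans hs2)).trans hs1)
  have hev : ∀ᶠ s in nhdsWithin ε (Set.Ioi ε), φ s < ε :=
    Filter.eventually_lt_of_limsup_lt (hφls ε hε) hbdd
  rw [Filter.eventually_iff, mem_nhdsGT_iff_exists_Ioo_subset] at hev
  obtain ⟨u, hu, hsub⟩ := hev
  refine ⟨u - ε, by simpa [sub_pos] using hu, fun s hs0 hs => ?_⟩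
  rcases lt_trichotomy s ε with h | h | h
  · rcases eq_or_lt_of_le hs0 with h0 | h0
    · rw [← h0, hφ0]; exact hε
    · exact (hφlt s h0).trans h
  · rw [h]; exact hφlt ε hε
  · exact hsub ⟨h, by linarith⟩

theorem stmt0 {X : Type*} [MetricSpace X] (φ : ℝ → ℝ)
    (hφ0 : φ 0 = 0) (hφnn : ∀ t, 0 ≤ t → 0 ≤ φ t)
    (hφlt : ∀ t > (0:ℝ), φ t < t)
    (hφls : ∀ t > (0:ℝ), Filter.limsup φ (nhdsWithin t (Set.Ioi t)) < t)
    (f : X → X) (hf : ∀ x y, dist (f x) (f y) ≤ φ (dist x y)) :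
    ∀ x : X, CauchySeq (fun n => f^[n] x) := by
  have hφle : ∀ t, 0 ≤ t → φ t ≤ t := by
    intro t ht
    rcases eq_or_lt_of_le ht with h | h
    · rw [← h, hφ0]
    · exact (hφlt t h).le
  have key := key_mk φ hφ0 hφlt hφls
  intro x
  set u : ℕ → X := fun n => f^[n] x with hu
  set c : ℕ → ℝ := fun n => dist (u n) (u (n + 1)) with hcdef
  have hstep : ∀ m n : ℕ, dist (u (m + 1)) (u (n + 1)) ≤ φ (dist (u m) (u n)) := by
    intro m n
    have h1 : u (m + 1) = f (u m) := Function.iterate_succ_apply' f m x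
    have h2 : u (n + 1) = f (u n) := Function.iterate_succ_apply' f n x
    rw [h1, h2]; exact hf _ _
  have hc : ∀ n, c (n + 1) ≤ φ (c n) := fun n => hstep n (n + 1)
  have hcmono : ∀ n, c (n + 1) ≤ c n := fun n => (hc n).trans (hφle _ dist_nonneg)
  have hanti : Antitone c := antitone_nat_of_succ_le hcmono
  have hbdd : BddBelow (Set.range c) := ⟨0, by rintro _ ⟨n, rfl⟩; exact dist_nonneg⟩
  set L : ℝ := ⨅ n, c n with hL
  have hlim : Filter.Tendsto c Filter.atTop (nhds L) := tendsto_atTop_ciInf hanti hbdd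
  have hLle : ∀ n, L ≤ c n := fun n => ciInf_le hbdd n
  have hL0 : 0 ≤ L := le_ciInf fun n => dist_nonneg
  have hLz : L = 0 := by
    by_contra hne
    have hLpos : 0 < L := lt_of_le_of_ne hL0 (Ne.symm hne)
    obtain ⟨δ, hδ, hδ'⟩ := key L hLpos
    have : ∀ᶠ n in Filter.atTop, c n < L + δ :=
      hlim (Iio_mem_nhds (by linarith))
    obtain ⟨n, hn⟩ := this.exists
    have h1 : c (n + 1) < L := (hc n).trans_lt (hδ' (c n) dist_nonneg hn)
    exact absurd (hLle (n + 1)) (not_le.2 h1)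
  rw [Metric.cauchySeq_iff']
  intro ε hε
  obtain ⟨δ, hδ, hδ'⟩ := key (ε / 2) (by linarith)
  set δ' : ℝ := min δ (ε / 2) with hδ'def
  have hδ'pos : 0 < δ' := lt_min hδ (by linarith)
  have : ∀ᶠ n in Filter.atTop, c n < δ' := by
    have := hlim (Iio_mem_nhds (show L < δ' by rw [hLz]; exact hδ'pos))
    simpa using this
  obtain ⟨N, hN⟩ := this.exists
  refine ⟨N, fun n hn => ?_⟩
  obtain ⟨k, rfl⟩ := Nat.exists_eq_add_of_le hn
  have claim : ∀ k : ℕ, dist (u (N + k)) (u N) < ε / 2 + δ' := by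
    intro k
    induction k with
    | zero => simpa using lt_of_lt_of_le (by linarith : (0:ℝ) < ε / 2 + δ') le_rfl
    | succ k ih =>
      have h1 : dist (u (N + k + 1)) (u N) ≤
          dist (u (N + k + 1)) (u (N + 1)) + dist (u (N + 1)) (u N) :=
        dist_triangle _ _ _
      have h2 : dist (u (N + k + 1)) (u (N + 1)) ≤ φ (dist (u (N + k)) (u N)) :=
        hstep (N + k) N
      have h3 : φ (dist (u (N + k)) (u N)) < ε / 2 :=
        hδ' _ dist_nonneg (lt_of_lt_of_le ih (by
          have : δ' ≤ δ := min_le_left _ _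
          linarith))
      have h4 : dist (u (N + 1)) (u N) < δ' := by
        rw [dist_comm]; exact hN
      have : (N + k) + 1 = N + (k + 1) := by ring
      calc dist (u (N + (k + 1))) (u N) = dist (u (N + k + 1)) (u N) := by rw [← this]
        _ ≤ dist (u (N + k + 1)) (u (N + 1)) + dist (u (N + 1)) (u N) := h1
        _ < ε / 2 + δ' := by linarith
  have := claim k
  have hδ'le : δ' ≤ ε / 2 := min_le_right _ _
  calc dist (u (N + k)) (u N) < ε / 2 + δ' := this
    _ ≤ ε / 2 + ε / 2 := by linarith
    _ = ε := by ring
end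

section
/- Let (X,d) be a metric space, x₀ ∈ X, f : X → X, and suppose the closure of the orbit O(x₀,f) = {x₀, f(x₀), f²(x₀), …} is complete. Let 0 < a < 1 and φ : (0,∞) → (0,∞) satisfy φ(t) < t and limsup_{s→t⁺} φ(s) < t for all t > 0. Suppose that for all x ≠ y in the closure of O(x₀,f), d(f(x),f(y)) ≤ φ(max{ d(x,y), a·d(x,f(x)) + (1−a)·d(y,f(y)), (1−a)·d(x,f(x)) + a·d(y,f(y)) }). Then the sequence (fⁿ(x₀)) is Cauchy and converges to some z ∈ X. -/
open Filter Function

theorem stmt4 {X : Type*} [MetricSpace X] (f : X → X) (x₀ : X)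
    (hcomp : IsComplete (closure (Set.range fun n => f^[n] x₀)))
    (a : ℝ) (ha0 : 0 < a) (ha1 : a < 1)
    (φ : ℝ → ℝ) (hφpos : ∀ t > (0:ℝ), 0 < φ t)
    (hφlt : ∀ t > (0:ℝ), φ t < t)
    (hφls : ∀ t > (0:ℝ), Filter.limsup φ (nhdsWithin t (Set.Ioi t)) < t)
    (hf : ∀ x ∈ closure (Set.range fun n => f^[n] x₀),
          ∀ y ∈ closure (Set.range fun n => f^[n] x₀), x ≠ y →
      dist (f x) (f y) ≤ φ (max (dist x y)
        (max (a * dist x (f x) + (1 - a) * dist y (f y))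
             ((1 - a) * dist x (f x) + a * dist y (f y))))) :
    CauchySeq (fun n => f^[n] x₀) ∧
      ∃ z : X, Tendsto (fun n => f^[n] x₀) atTop (nhds z) := by
  classical
  set x : ℕ → X := fun n => f^[n] x₀ with hxdef
  have hxS : ∀ n, x n ∈ closure (Set.range fun n => f^[n] x₀) :=
    fun n => subset_closure ⟨n, rfl⟩
  have hxsucc : ∀ n, x (n + 1) = f (x n) := fun n => Function.iterate_succ_apply' f n x₀
  suffices hC : CauchySeq x by
    refine ⟨hC, ?_⟩
    obtain ⟨z, _, hz⟩ := hcomp (Filter.map x atTop) hC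
      (by rw [le_principal_iff, Filter.mem_map]
          exact Filter.mem_of_superset Filter.univ_mem fun n _ => hxS n)
    exact ⟨z, hz⟩
  by_cases heq : ∃ n, x (n + 1) = x n
  · obtain ⟨n, hn⟩ := heq
    have hconst : ∀ k, x (n + k) = x n := by
      intro k
      induction k with
      | zero => rfl
      | succ k ih =>
          have : x (n + k + 1) = f (x (n + k)) := hxsucc (n + k)
          rw [show n + (k+1) = n + k + 1 from rfl, this, ih, ← hxsucc n, hn]
    have htend : Tendsto x atTop (nhds (x n)) := by
      apply tendsto_atTop_of_eventually_const (i₀ := n)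
      intro m hm
      obtain ⟨k, rfl⟩ := Nat.exists_eq_add_of_le hm
      exact hconst k
    exact htend.cauchySeq
  push_neg at heq
  set d : ℕ → ℝ := fun n => dist (x n) (x (n + 1)) with hddef
  have hdd : ∀ n, dist (x n) (x (n + 1)) = d n := fun _ => rfl
  have hdpos : ∀ n, 0 < d n := fun n => dist_pos.2 (fun h => heq n h.symm)
  have hdnn : ∀ n, 0 ≤ d n := fun n => dist_nonneg
  -- key step inequality
  have hstep : ∀ n, d (n + 1) ≤ φ (d n) := by
    intro n
    have hne : x n ≠ x (n + 1) := fun h => heq n h.symm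
    have h1 := hf (x n) (hxS n) (x (n + 1)) (hxS (n + 1)) hne
    rw [← hxsucc n, ← hxsucc (n + 1)] at h1
    rw [hdd n, show dist (x (n+1)) (x (n+1+1)) = d (n+1) from rfl] at h1
    have hle : d (n + 1) ≤ d n := by
      by_contra hlt
      push_neg at hlt
      have hM1 : max (d n) (max (a * d n + (1 - a) * d (n+1)) ((1 - a) * d n + a * d (n+1))) < d (n + 1) := by
        apply max_lt hlt (max_lt _ _) <;> nlinarith [hdpos n, hdpos (n+1)]
      have hM0 : 0 < max (d n) (max (a * d n + (1 - a) * d (n+1)) ((1 - a) * d n + a * d (n+1))) :=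
        lt_of_lt_of_le (hdpos n) (le_max_left _ _)
      have h2 := hφlt _ hM0
      linarith
    have hMeq : max (d n) (max (a * d n + (1 - a) * d (n+1)) ((1 - a) * d n + a * d (n+1))) = d n := by
      rw [max_eq_left]
      apply max_le <;> nlinarith
    rwa [hMeq] at h1
  have hdec : ∀ n, d (n + 1) < d n := fun n => lt_of_le_of_lt (hstep n) (hφlt _ (hdpos n))
  -- the distances tend to 0
  have hbdd : BddBelow (Set.range d) := ⟨0, by rintro _ ⟨n, rfl⟩; exact hdnn n⟩
  have hL : Tendsto d atTop (nhds (⨅ n, d n)) :=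
    tendsto_atTop_ciInf (strictAnti_nat_of_succ_lt hdec).antitone hbdd
  have hLle : ∀ n, (⨅ n, d n) ≤ d n := fun n => ciInf_le hbdd n
  have hLlt : ∀ n, (⨅ n, d n) < d n := fun n => lt_of_le_of_lt (hLle (n+1)) (hdec n)
  have hd0 : Tendsto d atTop (nhds 0) := by
    rcases (le_ciInf hdnn).eq_or_lt with h | h
    · rwa [← h] at hL
    · exfalso
      set L := ⨅ n, d n with hLdef
      have hbdφ : IsBoundedUnder (· ≤ ·) (nhdsWithin L (Set.Ioi L)) φ := by
        refine ⟨L + 1, ?_⟩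
        rw [Filter.eventually_map]
        filter_upwards [Ioo_mem_nhdsGT (show L < L + 1 by linarith)] with s hs
        have := hφlt s (h.trans hs.1)
        linarith [hs.2]
      have hev : ∀ᶠ s in nhdsWithin L (Set.Ioi L), φ s < L :=
        Filter.eventually_lt_of_limsup_lt (hφls L h) hbdφ
      have htL : Tendsto d atTop (nhdsWithin L (Set.Ioi L)) :=
        tendsto_nhdsWithin_of_tendsto_nhds_of_eventually_within _ hL
          (Filter.Eventually.of_forall fun n => hLlt n)
      obtain ⟨n, hn⟩ := (htL.eventually hev).exists
      have := hstep n
      linarith [hLle (n + 1)]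
  -- Cauchy
  rw [Metric.cauchySeq_iff]
  by_contra hnc
  push_neg at hnc
  obtain ⟨ε, hε, hnc⟩ := hnc
  have hlsε := hφls ε hε
  have hφε := hφlt ε hε
  obtain ⟨c, hc1, hc2⟩ := exists_between (max_lt hlsε hφε)
  have hφεc : φ ε < c := lt_of_le_of_lt (le_max_right _ _) hc1
  have hbdφ : IsBoundedUnder (· ≤ ·) (nhdsWithin ε (Set.Ioi ε)) φ := by
    refine ⟨ε + 1, ?_⟩
    rw [Filter.eventually_map]
    filter_upwards [Ioo_mem_nhdsGT (show ε < ε + 1 by linarith)] with s hs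
    have := hφlt s (hε.trans hs.1)
    linarith [hs.2]
  have hev : ∀ᶠ s in nhdsWithin ε (Set.Ioi ε), φ s < c :=
    Filter.eventually_lt_of_limsup_lt (lt_of_le_of_lt (le_max_left _ _) hc1) hbdφ
  obtain ⟨u, hu, hsub⟩ := mem_nhdsGT_iff_exists_Ioo_subset.1 hev
  have huε : ε < u := hu
  set δ : ℝ := min (u - ε) (min ((ε - c) / 3) ε) with hδdef
  have hδpos : 0 < δ := by
    apply lt_min (by linarith) (lt_min (by linarith) hε)
  have hδ1 : δ ≤ u - ε := min_le_left _ _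
  have hδ2 : δ ≤ (ε - c) / 3 := le_trans (min_le_right _ _) (min_le_left _ _)
  have hδ3 : δ ≤ ε := le_trans (min_le_right _ _) (min_le_right _ _)
  obtain ⟨N, hN⟩ := Filter.eventually_atTop.1 (hd0.eventually_lt_const hδpos)
  obtain ⟨m₀, hm₀, n₀, hn₀, hd₀⟩ := hnc N
  -- WLOG n' < m with nice properties
  have key : ∃ p q : ℕ, N ≤ q ∧ q < p ∧ ε ≤ dist (x p) (x q) := by
    rcases lt_trichotomy m₀ n₀ with h | h | h
    · exact ⟨n₀, m₀, hm₀, h, by rwa [dist_comm]⟩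
    · exfalso; rw [h] at hd₀; simp at hd₀; linarith
    · exact ⟨m₀, n₀, hn₀, h, hd₀⟩
  obtain ⟨p, q, hqN, hqp, hpq⟩ := key
  have hP : ∃ m, q < m ∧ ε ≤ dist (x m) (x q) := ⟨p, hqp, hpq⟩
  have hqm : q < Nat.find hP := (Nat.find_spec hP).1
  have hεm : ε ≤ dist (x (Nat.find hP)) (x q) := (Nat.find_spec hP).2
  obtain ⟨k, hk⟩ : ∃ k, Nat.find hP = k + 1 := ⟨Nat.find hP - 1, by omega⟩
  rw [hk] at hεm hqm
  have hprev' : dist (x k) (x q) < ε := by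
    rcases eq_or_lt_of_le (Nat.lt_succ_iff.1 hqm) with h | h
    · rw [h, dist_self]; exact hε
    · have hmin := Nat.find_min hP (show k < Nat.find hP from by omega)
      push_neg at hmin
      exact hmin h
  have hkN : N ≤ k := by omega
  have hdk : d k < δ := hN k hkN
  have hdk1 : d (k + 1) < δ := hN (k + 1) (by omega)
  have hdq : d q < δ := hN q hqN
  -- bounds on t
  set t : ℝ := dist (x (k + 1)) (x q) with htdef
  have htε : ε ≤ t := hεm
  have htu : t < ε + δ := by
    have h3 : t ≤ dist (x (k + 1)) (x k) + dist (x k) (x q) := dist_triangle _ _ _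
    rw [dist_comm (x (k+1)) (x k), hdd k] at h3
    linarith
  -- apply the contraction hypothesis
  have hne : x (k + 1) ≠ x q := by
    intro h
    have ht0 : t = 0 := by rw [htdef, h, dist_self]
    linarith
  have h2 := hf (x (k + 1)) (hxS (k + 1)) (x q) (hxS q) hne
  rw [← hxsucc (k + 1), ← hxsucc q] at h2
  rw [show dist (x (k+1)) (x (k+1+1)) = d (k+1) from rfl, hdd q, ← htdef] at h2
  have hMeq : max t (max (a * d (k+1) + (1 - a) * d q) ((1 - a) * d (k+1) + a * d q)) = t := by
    rw [max_eq_left]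
    apply max_le <;> nlinarith [hdnn (k+1), hdnn q]
  rw [hMeq] at h2
  -- lower bound on dist (x (k+2)) (x (q+1))
  have h4 : t ≤ d (k + 1) + dist (x (k + 2)) (x (q + 1)) + d q := by
    have := dist_triangle4 (x (k + 1)) (x (k + 2)) (x (q + 1)) (x q)
    rw [← htdef] at this
    calc t ≤ dist (x (k+1)) (x (k+2)) + dist (x (k+2)) (x (q+1)) + dist (x (q+1)) (x q) := this
    _ = d (k+1) + dist (x (k+2)) (x (q+1)) + dist (x (q+1)) (x q) := by rw [hdd (k+1)]
    _ = _ := by rw [dist_comm (x (q+1)) (x q), hdd q]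
  have hφt : c < φ t := by
    have : ε - 2 * δ < dist (x (k+2)) (x (q+1)) := by linarith
    have h5 : dist (x (k+2)) (x (q+1)) ≤ φ t := h2
    linarith
  rcases eq_or_lt_of_le htε with h | h
  · rw [← h] at hφt; linarith
  · have : t ∈ Set.Ioo ε u := ⟨h, by linarith⟩
    exact absurd (hsub this) (not_lt.2 (le_of_lt hφt))
end

section
/- Let (X,d) be a metric space, x₀ ∈ X, f : X → X with the closure of the orbit O(x₀,f) complete, 0 < a < 1, and φ : (0,∞) → (0,∞) with φ(t) < t and limsup_{s→t⁺} φ(s) < t for all t > 0. Suppose d(f(x),f(y)) ≤ φ(max{ d(x,y), a·d(x,f(x)) + (1−a)·d(y,f(y)), (1−a)·d(x,f(x)) + a·d(y,f(y)) }) for all x ≠ y in the closure of O(x₀,f). If z = lim_{n→∞} fⁿ(x₀) exists, then z is a fixed point of f; in particular, no continuity assumption on f is needed. -/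
open Filter Function

theorem stmt5 {X : Type*} [MetricSpace X] (f : X → X) (x₀ : X)
    (hcomp : IsComplete (closure (Set.range fun n => f^[n] x₀)))
    (a : ℝ) (ha0 : 0 < a) (ha1 : a < 1)
    (φ : ℝ → ℝ) (hφpos : ∀ t > (0:ℝ), 0 < φ t)
    (hφlt : ∀ t > (0:ℝ), φ t < t)
    (hφls : ∀ t > (0:ℝ), Filter.limsup φ (nhdsWithin t (Set.Ioi t)) < t)
    (hf : ∀ x ∈ closure (Set.range fun n => f^[n] x₀),
          ∀ y ∈ closure (Set.range fun n => f^[n] x₀), x ≠ y →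
      dist (f x) (f y) ≤ φ (max (dist x y)
        (max (a * dist x (f x) + (1 - a) * dist y (f y))
             ((1 - a) * dist x (f x) + a * dist y (f y)))))
    (z : X) (hz : Tendsto (fun n => f^[n] x₀) atTop (nhds z)) :
    f z = z := by
  by_contra hne
  have hzS : z ∈ closure (Set.range fun n => f^[n] x₀) :=
    mem_closure_of_tendsto hz (Eventually.of_forall fun n => Set.mem_range_self n)
  have hxS : ∀ n, f^[n] x₀ ∈ closure (Set.range fun n => f^[n] x₀) :=
    fun n => subset_closure (Set.mem_range_self n)
  have hD : 0 < dist z (f z) := dist_pos.2 (fun h => hne h.symm)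
  have hzshift : Tendsto (fun n => f^[n+1] x₀) atTop (nhds z) :=
    hz.comp (tendsto_add_atTop_nat 1)
  by_cases hev : ∀ᶠ n in atTop, f^[n] x₀ ≠ z
  · -- main case
    set D := dist z (f z) with hDdef
    have hd : Tendsto (fun n => dist (f^[n] x₀) (f (f^[n] x₀))) atTop (nhds 0) := by
      have : Tendsto (fun n => dist (f^[n] x₀) (f^[n+1] x₀)) atTop (nhds (dist z z)) :=
        hz.dist hzshift
      simpa [Function.iterate_succ_apply'] using this
    have hdz : Tendsto (fun n => dist (f^[n] x₀) z) atTop (nhds 0) := by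
      simpa using hz.dist (tendsto_const_nhds (x := z))
    have hs : Tendsto (fun n => max (dist (f^[n] x₀) z)
        (max (a * dist (f^[n] x₀) (f (f^[n] x₀)) + (1-a) * D)
             ((1-a) * dist (f^[n] x₀) (f (f^[n] x₀)) + a * D)))
        atTop (nhds (max 0 (max ((1-a)*D) (a*D)))) := by
      refine Tendsto.max hdz (Tendsto.max ?_ ?_)
      · have := (tendsto_const_nhds (x := a)).mul hd |>.add (tendsto_const_nhds (x := (1-a)*D))
        simpa using this
      · have := (tendsto_const_nhds (x := (1-a))).mul hd |>.add (tendsto_const_nhds (x := a*D))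
        simpa using this
    have hg : Tendsto (fun n => dist (f^[n+1] x₀) (f z)) atTop (nhds D) :=
      hzshift.dist tendsto_const_nhds
    have hle : ∀ᶠ n in atTop, dist (f^[n+1] x₀) (f z) ≤ max (dist (f^[n] x₀) z)
        (max (a * dist (f^[n] x₀) (f (f^[n] x₀)) + (1-a) * D)
             ((1-a) * dist (f^[n] x₀) (f (f^[n] x₀)) + a * D)) := by
      filter_upwards [hev] with n hn
      set s := max (dist (f^[n] x₀) z)
        (max (a * dist (f^[n] x₀) (f (f^[n] x₀)) + (1-a) * D)
             ((1-a) * dist (f^[n] x₀) (f (f^[n] x₀)) + a * D)) with hsdef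
      have hspos : 0 < s := by
        have h1 : a * dist (f^[n] x₀) (f (f^[n] x₀)) + (1-a) * D ≤ s :=
          le_trans (le_max_left _ _) (le_max_right _ _)
        have h2 : 0 ≤ dist (f^[n] x₀) (f (f^[n] x₀)) := dist_nonneg
        nlinarith
      have := hf _ (hxS n) _ hzS hn
      calc dist (f^[n+1] x₀) (f z) = dist (f (f^[n] x₀)) (f z) := by
            rw [Function.iterate_succ_apply']
        _ ≤ φ s := this
        _ ≤ s := le_of_lt (hφlt s hspos)
    have hfin : D ≤ max 0 (max ((1-a)*D) (a*D)) :=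
      le_of_tendsto_of_tendsto hg hs hle
    have h1 : (1-a)*D < D := by nlinarith
    have h2 : a*D < D := by nlinarith
    have : max 0 (max ((1-a)*D) (a*D)) < D := max_lt hD (max_lt h1 h2)
    linarith
  · rw [Filter.not_eventually] at hev
    push_neg at hev
    have hfreq : ∃ᶠ n in atTop, f^[n+1] x₀ = f z := by
      refine hev.mono fun n hn => ?_
      rw [Function.iterate_succ_apply', hn]
    exact hne (tendsto_nhds_unique_of_frequently_eq hzshift tendsto_const_nhds hfreq).symm
end

section
/- Let (X,d) be a metric space, x₀ ∈ X, f : X → X with the closure of the orbit O(x₀,f) complete, 0 < a < 1, and φ : (0,∞) → (0,∞) with φ(t) < t and limsup_{s→t⁺} φ(s) < t for all t > 0. Suppose d(f(x),f(y)) ≤ φ(max{ d(x,y), a·d(x,f(x)) + (1−a)·d(y,f(y)), (1−a)·d(x,f(x)) + a·d(y,f(y)) }) for all x ≠ y in the closure of O(x₀,f). Then f has a unique fixed point in the closure of O(x₀,f). -/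
open Filter Function

/-- Auxiliary real-arithmetic lemma: the basic contraction step on consecutive
orbit distances. -/
lemma stmt6_aux {a u v : ℝ} (ha0 : 0 < a) (ha1 : a < 1) (hu : 0 < u) (_hv : 0 ≤ v)
    {φ : ℝ → ℝ} (hφlt : ∀ t > (0:ℝ), φ t < t)
    (h : v ≤ φ (max u (max (a * u + (1 - a) * v) ((1 - a) * u + a * v)))) :
    v ≤ φ u := by
  set M := max u (max (a * u + (1 - a) * v) ((1 - a) * u + a * v)) with hM
  have hMpos : 0 < M := lt_of_lt_of_le hu (le_max_left _ _)
  have hlt : v < u := by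
    by_contra hc
    push_neg at hc
    have hMle : M ≤ v := by
      apply max_le hc
      apply max_le <;> nlinarith
    have := hφlt M hMpos
    linarith
  have hMeq : M = u := by
    apply le_antisymm
    · apply max_le le_rfl
      apply max_le <;> nlinarith
    · exact le_max_left _ _
  rwa [hMeq] at h

theorem stmt6 {X : Type*} [MetricSpace X] (f : X → X) (x₀ : X)
    (hcomp : IsComplete (closure (Set.range fun n => f^[n] x₀)))
    (a : ℝ) (ha0 : 0 < a) (ha1 : a < 1)
    (φ : ℝ → ℝ) (hφpos : ∀ t > (0:ℝ), 0 < φ t)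
    (hφlt : ∀ t > (0:ℝ), φ t < t)
    (hφls : ∀ t > (0:ℝ), Filter.limsup φ (nhdsWithin t (Set.Ioi t)) < t)
    (hf : ∀ x ∈ closure (Set.range fun n => f^[n] x₀),
          ∀ y ∈ closure (Set.range fun n => f^[n] x₀), x ≠ y →
      dist (f x) (f y) ≤ φ (max (dist x y)
        (max (a * dist x (f x) + (1 - a) * dist y (f y))
             ((1 - a) * dist x (f x) + a * dist y (f y))))) :
    ∃! z : X, z ∈ closure (Set.range fun n => f^[n] x₀) ∧ f z = z := by
  set x : ℕ → X := fun n => f^[n] x₀ with hxdef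
  set S : Set X := closure (Set.range x) with hSdef
  have hxS : ∀ n, x n ∈ S := fun n => subset_closure ⟨n, rfl⟩
  have hstep : ∀ n, f (x n) = x (n + 1) := fun n =>
    (Function.iterate_succ_apply' f n x₀).symm
  -- Key property of φ: for each ε > 0 there is δ > 0 with φ s < ε on (0, ε + δ)
  have keyA : ∀ ε > (0:ℝ), ∃ δ > (0:ℝ), ∀ s, 0 < s → s < ε + δ → φ s < ε := by
    intro ε hε
    have hbdd : IsBoundedUnder (· ≤ ·) (nhdsWithin ε (Set.Ioi ε)) φ := by
      refine ⟨ε + 1, ?_⟩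
      rw [Filter.eventually_map]
      filter_upwards [Ioo_mem_nhdsGT_of_mem
        (⟨le_refl ε, by linarith⟩ : ε ∈ Set.Ico ε (ε + 1))] with s hs
      have h1 := hφlt s (lt_trans hε hs.1)
      have h2 := hs.2
      linarith
    have hev : ∀ᶠ s in nhdsWithin ε (Set.Ioi ε), φ s < ε :=
      eventually_lt_of_limsup_lt (hφls ε hε) hbdd
    rw [Filter.eventually_iff, mem_nhdsGT_iff_exists_Ioo_subset] at hev
    obtain ⟨u, hu, hsub⟩ := hev
    have hu' : ε < u := hu
    refine ⟨u - ε, by linarith, fun s hs0 hsu => ?_⟩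
    rcases le_or_gt s ε with h | h
    · exact lt_of_lt_of_le (hφlt s hs0) h
    · exact hsub ⟨h, by linarith⟩
  -- Uniqueness of fixed points in S
  have uniq : ∀ z ∈ S, ∀ w ∈ S, f z = z → f w = w → z = w := by
    intro z hz w hw hfz hfw
    by_contra hne
    have hd : 0 < dist z w := dist_pos.2 hne
    have h1 := hf z hz w hw hne
    rw [hfz, hfw, dist_self, dist_self] at h1
    simp only [mul_zero, add_zero, zero_add, max_self] at h1
    rw [max_eq_left dist_nonneg] at h1
    have := hφlt _ hd
    linarith
  by_cases hfix : ∃ n, x (n + 1) = x n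
  · -- a point on the orbit is already a fixed point
    obtain ⟨n, hn⟩ := hfix
    refine ⟨x n, ⟨hxS n, by rw [hstep n]; exact hn⟩, ?_⟩
    rintro y ⟨hyS, hy⟩
    exact uniq y hyS (x n) (hxS n) hy (by rw [hstep n]; exact hn)
  push_neg at hfix
  set d : ℕ → ℝ := fun n => dist (x n) (x (n + 1)) with hddef
  have hd0 : ∀ n, 0 < d n := fun n => dist_pos.2 fun h => hfix n h.symm
  -- contraction step on consecutive distances
  have hB : ∀ n, d (n + 1) ≤ φ (d n) := by
    intro n
    have hne' : x n ≠ x (n + 1) := fun h => hfix n h.symm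
    have h1 := hf (x n) (hxS n) (x (n + 1)) (hxS (n + 1)) hne'
    rw [hstep n, hstep (n + 1)] at h1
    exact stmt6_aux ha0 ha1 (hd0 n) dist_nonneg hφlt h1
  have hBlt : ∀ n, d (n + 1) < d n := fun n =>
    lt_of_le_of_lt (hB n) (hφlt _ (hd0 n))
  have hanti : Antitone d := (strictAnti_nat_of_succ_lt hBlt).antitone
  have hbddb : BddBelow (Set.range d) := ⟨0, by rintro y ⟨n, rfl⟩; exact dist_nonneg⟩
  have htendL : Tendsto d atTop (nhds (⨅ n, d n)) := tendsto_atTop_ciInf hanti hbddb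
  have hL0 : 0 ≤ ⨅ n, d n := le_ciInf fun n => dist_nonneg
  have hLle : ∀ n, (⨅ n, d n) ≤ d n := fun n => ciInf_le hbddb n
  have hLzero : (⨅ n, d n) = 0 := by
    by_contra h
    have hLpos : 0 < ⨅ n, d n := lt_of_le_of_ne hL0 (Ne.symm h)
    obtain ⟨δ, hδ, hδφ⟩ := keyA _ hLpos
    obtain ⟨n, hn⟩ := (htendL.eventually_lt_const
      (by linarith : (⨅ n, d n) < (⨅ n, d n) + δ)).exists
    have h2 : φ (d n) < ⨅ n, d n := hδφ (d n) (hd0 n) hn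
    have h3 := hLle (n + 1)
    have h4 := hB n
    linarith
  have htend0 : Tendsto d atTop (nhds 0) := hLzero ▸ htendL
  -- the orbit is Cauchy
  have hcauchy : CauchySeq x := by
    rw [Metric.cauchySeq_iff]
    intro ε hε
    obtain ⟨δ, hδ, hδφ⟩ := keyA (ε / 4) (by linarith)
    set δ' : ℝ := min (δ / 2) (ε / 8) with hδ'def
    have hδ'pos : 0 < δ' := lt_min (by linarith) (by linarith)
    have hδ'le : δ' ≤ δ / 2 := min_le_left _ _
    have hδ'le2 : δ' ≤ ε / 8 := min_le_right _ _
    obtain ⟨N, hN⟩ := eventually_atTop.1 (htend0.eventually_lt_const hδ'pos)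
    have claim : ∀ k, dist (x N) (x (N + k)) ≤ ε / 4 + δ' := by
      intro k
      induction k with
      | zero => simp only [Nat.add_zero, dist_self]; positivity
      | succ k ih =>
        have hstep2 : dist (x (N + 1)) (x (N + k + 1)) < ε / 4 := by
          by_cases heq : x N = x (N + k)
          · rw [← hstep N, ← hstep (N + k), heq]
            simp only [dist_self]; linarith
          · have h1 := hf (x N) (hxS N) (x (N + k)) (hxS (N + k)) heq
            rw [hstep N, hstep (N + k)] at h1
            have hdN : dist (x N) (x (N + 1)) < δ' := hN N le_rfl
            have hdNk : dist (x (N + k)) (x (N + k + 1)) < δ' :=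
              hN (N + k) (Nat.le_add_right _ _)
            have hdN0 : (0:ℝ) ≤ dist (x N) (x (N + 1)) := dist_nonneg
            have hdNk0 : (0:ℝ) ≤ dist (x (N + k)) (x (N + k + 1)) := dist_nonneg
            have hMpos : 0 < max (dist (x N) (x (N + k)))
                (max (a * dist (x N) (x (N + 1)) + (1 - a) * dist (x (N + k)) (x (N + k + 1)))
                     ((1 - a) * dist (x N) (x (N + 1)) + a * dist (x (N + k)) (x (N + k + 1)))) :=
              lt_of_lt_of_le (dist_pos.2 heq) (le_max_left _ _)
            have hMlt : max (dist (x N) (x (N + k)))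
                (max (a * dist (x N) (x (N + 1)) + (1 - a) * dist (x (N + k)) (x (N + k + 1)))
                     ((1 - a) * dist (x N) (x (N + 1)) + a * dist (x (N + k)) (x (N + k + 1))))
                < ε / 4 + δ := by
              apply max_lt (by linarith)
              apply max_lt <;> nlinarith
            exact lt_of_le_of_lt h1 (hδφ _ hMpos hMlt)
        have htri : dist (x N) (x (N + (k + 1))) ≤
            dist (x N) (x (N + 1)) + dist (x (N + 1)) (x (N + k + 1)) := by
          rw [show N + (k + 1) = N + k + 1 by ring]
          exact dist_triangle _ _ _
        have hdN : dist (x N) (x (N + 1)) < δ' := hN N le_rfl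
        linarith
    refine ⟨N, fun m hm n hn => ?_⟩
    have key : ∀ p, N ≤ p → dist (x N) (x p) ≤ ε / 4 + δ' := by
      intro p hp
      have := claim (p - N)
      rwa [Nat.add_sub_cancel' hp] at this
    calc dist (x m) (x n) ≤ dist (x m) (x N) + dist (x N) (x n) := dist_triangle _ _ _
      _ = dist (x N) (x m) + dist (x N) (x n) := by rw [dist_comm]
      _ ≤ (ε / 4 + δ') + (ε / 4 + δ') := add_le_add (key m hm) (key n hn)
      _ < ε := by linarith
  -- limit point
  obtain ⟨z, hzS, hz⟩ := cauchySeq_tendsto_of_isComplete hcomp hxS hcauchy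
  have hz1 : Tendsto (fun n => x (n + 1)) atTop (nhds z) :=
    hz.comp (tendsto_add_atTop_nat 1)
  -- the limit is a fixed point
  have hfz : f z = z := by
    by_cases hfreq : ∃ᶠ n in atTop, x n = z
    · by_contra hne
      have hd : 0 < dist (f z) z := dist_pos.2 hne
      obtain ⟨N, hN⟩ := Metric.tendsto_atTop.1 hz1 (dist (f z) z) hd
      obtain ⟨n, hxn, hn⟩ := (hfreq.and_eventually (eventually_ge_atTop N)).exists
      have h1 := hN n hn
      rw [← hstep n, hxn] at h1
      exact lt_irrefl _ h1
    · rw [Filter.not_frequently] at hfreq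
      by_contra hne
      have hD : 0 < dist z (f z) := dist_pos.2 fun h => hne h.symm
      have hca : a ≤ max a (1 - a) := le_max_left _ _
      have hc1a : 1 - a ≤ max a (1 - a) := le_max_right _ _
      have hc1 : max a (1 - a) < 1 := max_lt ha1 (by linarith)
      have hc0 : 0 < max a (1 - a) := lt_of_lt_of_le ha0 hca
      set ε : ℝ := (max a (1 - a) * dist z (f z) + dist z (f z)) / 2 with hεdef
      have hcD : max a (1 - a) * dist z (f z) < dist z (f z) := by nlinarith
      have hε : 0 < ε := by positivity
      have hεD : ε < dist z (f z) := by rw [hεdef]; linarith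
      have hcDε : max a (1 - a) * dist z (f z) < ε := by rw [hεdef]; linarith
      obtain ⟨δ, hδ, hδφ⟩ := keyA ε hε
      have he1 : ∀ᶠ n in atTop, dist (x n) z < ε + δ := by
        obtain ⟨N, hN⟩ := Metric.tendsto_atTop.1 hz (ε + δ) (by linarith)
        exact eventually_atTop.2 ⟨N, hN⟩
      have he3 : ∀ᶠ n in atTop, d n < δ := htend0.eventually_lt_const hδ
      have he4 : ∀ᶠ n in atTop, dist (x (n + 1)) z < dist z (f z) - ε := by
        obtain ⟨N, hN⟩ := Metric.tendsto_atTop.1 hz1 (dist z (f z) - ε) (by linarith)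
        exact eventually_atTop.2 ⟨N, hN⟩
      obtain ⟨n, h1, h2, h3, h4⟩ := (hfreq.and (he1.and (he3.and he4))).exists
      have hcon := hf (x n) (hxS n) z hzS h1
      rw [hstep n] at hcon
      have hdn : dist (x n) (x (n + 1)) < δ := h3
      have hdn0 : (0:ℝ) ≤ dist (x n) (x (n + 1)) := dist_nonneg
      have hMpos : 0 < max (dist (x n) z)
          (max (a * dist (x n) (x (n + 1)) + (1 - a) * dist z (f z))
               ((1 - a) * dist (x n) (x (n + 1)) + a * dist z (f z))) := by
        have : 0 < a * dist (x n) (x (n + 1)) + (1 - a) * dist z (f z) := by nlinarith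
        exact lt_of_lt_of_le this (le_trans (le_max_left _ _) (le_max_right _ _))
      have hMlt : max (dist (x n) z)
          (max (a * dist (x n) (x (n + 1)) + (1 - a) * dist z (f z))
               ((1 - a) * dist (x n) (x (n + 1)) + a * dist z (f z))) < ε + δ := by
        apply max_lt h2
        apply max_lt <;> nlinarith
      have h5 : dist (x (n + 1)) (f z) < ε := lt_of_le_of_lt hcon (hδφ _ hMpos hMlt)
      have h6 : dist z (f z) ≤ dist z (x (n + 1)) + dist (x (n + 1)) (f z) :=
        dist_triangle _ _ _
      rw [dist_comm z (x (n + 1))] at h6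
      linarith
  exact ⟨z, ⟨hzS, hfz⟩, fun y ⟨hyS, hy⟩ => uniq y hyS z hzS hy hfz⟩
end

section
/- Let (X,d) be a metric space, x₀ ∈ X, f : X → X with the closure of the orbit O(x₀,f) complete, and φ : (0,∞) → (0,∞) with φ(t) < t and limsup_{s→t⁺} φ(s) < t for all t > 0. Suppose d(f(x),f(y)) ≤ φ(max{ d(x,y), d(x,f(x)), d(y,f(y)) }) for all x ≠ y in the closure of O(x₀,f). Then the sequence (fⁿ(x₀)) is Cauchy and converges to some z ∈ X. -/
open Filter Function

/-- Key consequence of the limsup condition: around each `ε > 0` there is a right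
neighborhood on which `φ` is bounded by some `c < ε` (with `0 < c`). -/
lemma keyL (φ : ℝ → ℝ) (hφpos : ∀ t > (0:ℝ), 0 < φ t)
    (hφlt : ∀ t > (0:ℝ), φ t < t)
    (hφls : ∀ t > (0:ℝ), Filter.limsup φ (nhdsWithin t (Set.Ioi t)) < t)
    (ε : ℝ) (hε : 0 < ε) :
    ∃ c, 0 < c ∧ c < ε ∧ ∃ δ > 0, ∀ s, ε ≤ s → s < ε + δ → φ s ≤ c := by
  have hL := hφls ε hε
  have hbdd : (nhdsWithin ε (Set.Ioi ε)).IsBoundedUnder (· ≤ ·) φ := by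
    refine ⟨ε + 1, ?_⟩
    rw [Filter.eventually_map]
    have hIoo : Set.Ioo ε (ε + 1) ∈ nhdsWithin ε (Set.Ioi ε) :=
      Ioo_mem_nhdsGT_of_mem (Set.mem_Ico.mpr ⟨le_refl ε, by linarith⟩)
    filter_upwards [hIoo] with s hs
    exact le_of_lt (lt_of_lt_of_le (hφlt s (lt_trans hε hs.1)) hs.2.le)
  set b : ℝ := (Filter.limsup φ (nhdsWithin ε (Set.Ioi ε)) + ε) / 2 with hb
  have hLb : Filter.limsup φ (nhdsWithin ε (Set.Ioi ε)) < b := by rw [hb]; linarith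
  have hbε : b < ε := by rw [hb]; linarith
  have hev := Filter.eventually_lt_of_limsup_lt hLb hbdd
  obtain ⟨u, hu, hsub⟩ := mem_nhdsGT_iff_exists_Ioo_subset.mp hev
  refine ⟨max b (φ ε), lt_max_of_lt_right (hφpos ε hε), max_lt hbε (hφlt ε hε),
    u - ε, by simpa using hu, fun s hs1 hs2 => ?_⟩
  rcases eq_or_lt_of_le hs1 with h | h
  · exact le_max_of_le_right (le_of_eq (by rw [h]))
  · exact le_max_of_le_left (le_of_lt (hsub ⟨h, by linarith⟩))

theorem stmt7 {X : Type*} [MetricSpace X] (f : X → X) (x₀ : X)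
    (hcomp : IsComplete (closure (Set.range fun n => f^[n] x₀)))
    (φ : ℝ → ℝ) (hφpos : ∀ t > (0:ℝ), 0 < φ t)
    (hφlt : ∀ t > (0:ℝ), φ t < t)
    (hφls : ∀ t > (0:ℝ), Filter.limsup φ (nhdsWithin t (Set.Ioi t)) < t)
    (hf : ∀ x ∈ closure (Set.range fun n => f^[n] x₀),
          ∀ y ∈ closure (Set.range fun n => f^[n] x₀), x ≠ y →
      dist (f x) (f y) ≤ φ (max (dist x y) (max (dist x (f x)) (dist y (f y))))) :
    CauchySeq (fun n => f^[n] x₀) ∧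
      ∃ z : X, Tendsto (fun n => f^[n] x₀) atTop (nhds z) := by
  set x : ℕ → X := fun n => f^[n] x₀ with hxdef
  have hxS : ∀ n, x n ∈ closure (Set.range fun n => f^[n] x₀) :=
    fun n => subset_closure ⟨n, rfl⟩
  have hx1 : ∀ n, x (n + 1) = f (x n) := fun n => Function.iterate_succ_apply' f n x₀
  suffices hC : CauchySeq x by
    refine ⟨hC, ?_⟩
    obtain ⟨z, _, ht⟩ := cauchySeq_tendsto_of_isComplete hcomp hxS hC
    exact ⟨z, ht⟩
  by_cases hconst : ∃ n, x (n + 1) = x n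
  · obtain ⟨n, hn⟩ := hconst
    have heq : ∀ m, n ≤ m → x m = x n := by
      intro m hm
      induction m, hm using Nat.le_induction with
      | base => rfl
      | succ m hm ih => rw [hx1 m, ih, ← hx1 n, hn]
    have : Tendsto x atTop (nhds (x n)) := by
      refine (Filter.tendsto_congr' ?_).mpr tendsto_const_nhds
      exact Filter.eventually_atTop.mpr ⟨n, heq⟩
    exact this.cauchySeq
  push_neg at hconst
  set d : ℕ → ℝ := fun n => dist (x n) (x (n + 1)) with hddef
  have hdpos : ∀ n, 0 < d n := fun n => dist_pos.mpr (Ne.symm (hconst n))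
  -- the main recurrence
  have hrec : ∀ n, d (n + 1) ≤ φ (d n) ∧ d (n + 1) < d n := by
    intro n
    have h1 : d (n + 1) ≤ φ (max (d n) (max (d n) (d (n + 1)))) := by
      have h := hf (x n) (hxS n) (x (n + 1)) (hxS (n + 1)) (Ne.symm (hconst n))
      rw [← hx1 n, ← hx1 (n + 1)] at h
      exact h
    by_cases hle : d n ≤ d (n + 1)
    · exfalso
      have hmax : max (d n) (max (d n) (d (n + 1))) = d (n + 1) := by
        rw [max_eq_right hle, max_eq_right hle]
      rw [hmax] at h1
      exact absurd (lt_of_le_of_lt h1 (hφlt _ (hdpos (n + 1)))) (lt_irrefl _)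
    · push_neg at hle
      have hmax : max (d n) (max (d n) (d (n + 1))) = d n := by
        rw [max_eq_left hle.le, max_self]
      rw [hmax] at h1
      exact ⟨h1, hle⟩
  have hanti : Antitone d := antitone_nat_of_succ_le fun n => (hrec n).2.le
  have hbddB : BddBelow (Set.range d) := ⟨0, fun y ⟨n, hn⟩ => hn ▸ (hdpos n).le⟩
  have htend : Tendsto d atTop (nhds (⨅ n, d n)) := tendsto_atTop_ciInf hanti hbddB
  have hδ0 : (⨅ n, d n) = 0 := by
    have h0le : 0 ≤ ⨅ n, d n := le_ciInf fun n => (hdpos n).le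
    rcases eq_or_lt_of_le h0le with h | h
    · exact h.symm
    · exfalso
      obtain ⟨c, hc0, hcδ, δ', hδ', hcφ⟩ := keyL φ hφpos hφlt hφls _ h
      have hev : ∀ᶠ n in atTop, d n < (⨅ n, d n) + δ' :=
        htend.eventually (eventually_lt_nhds (by linarith))
      obtain ⟨n, hn⟩ := hev.exists
      have h1 : φ (d n) ≤ c := hcφ (d n) (ciInf_le hbddB n) hn
      have h2 : (⨅ n, d n) ≤ d (n + 1) := ciInf_le hbddB (n + 1)
      linarith [(hrec n).1]
  rw [hδ0] at htend
  -- Cauchy criterion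
  rw [Metric.cauchySeq_iff]
  intro ε₀ hε₀
  set ε : ℝ := ε₀ / 4 with hεdef
  have hε : 0 < ε := by positivity
  obtain ⟨c, hc0, hcε, δ, hδ0', hcφ⟩ := keyL φ hφpos hφlt hφls ε hε
  set δ₁ : ℝ := min δ ε with hδ₁def
  have hδ₁pos : 0 < δ₁ := lt_min hδ0' hε
  have hδ₁ε : δ₁ ≤ ε := min_le_right _ _
  have hcφ₁ : ∀ s, ε ≤ s → s < ε + δ₁ → φ s ≤ c :=
    fun s h1 h2 => hcφ s h1 (lt_of_lt_of_le h2 (by linarith [min_le_left δ ε]))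
  set β : ℝ := min δ₁ (ε - c) with hβdef
  have hβpos : 0 < β := lt_min hδ₁pos (by linarith)
  obtain ⟨N, hN⟩ := (Metric.tendsto_atTop.mp htend) β hβpos
  have hdN : ∀ n, N ≤ n → d n < β := by
    intro n hn
    have := hN n hn
    rwa [Real.dist_eq, sub_zero, abs_of_pos (hdpos n)] at this
  -- claim: orbit after N stays within ε + δ₁ of x N
  have claim : ∀ k, dist (x N) (x (N + k)) < ε + δ₁ := by
    intro k
    induction k with
    | zero =>
      simp only [Nat.add_zero, dist_self]
      linarith
    | succ k ih =>
      set m : ℕ := N + k with hmdef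
      have hNm : N ≤ m := Nat.le_add_right N k
      have key : dist (x (N + 1)) (x (m + 1)) ≤ max 0 (φ (max (dist (x N) (x m)) (max (d N) (d m)))) ∨
          dist (x (N + 1)) (x (m + 1)) = 0 := by
        by_cases hxeq : x N = x m
        · right; rw [hx1, hx1, hxeq]; simp
        · left
          have h := hf (x N) (hxS N) (x m) (hxS m) hxeq
          rw [← hx1 N, ← hx1 m] at h
          exact le_max_of_le_right h
      have hdNβ : d N < β := hdN N le_rfl
      have hdmβ : d m < β := lt_of_le_of_lt (hanti hNm) hdNβ
      have hstep : dist (x (N + 1)) (x (m + 1)) < ε + δ₁ - β := by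
        rcases key with hk | hk
        · set M : ℝ := max (dist (x N) (x m)) (max (d N) (d m)) with hMdef
          have hMpos : 0 < M := lt_of_lt_of_le (hdpos N) (le_max_of_le_right (le_max_left _ _))
          have hMlt : M < ε + δ₁ := by
            apply max_lt ih
            apply max_lt <;> [skip; skip] <;>
              first
                | exact lt_of_lt_of_le hdNβ (by rw [hβdef]; exact le_trans (min_le_right _ _) (by linarith))
                | exact lt_of_lt_of_le hdmβ (by rw [hβdef]; exact le_trans (min_le_right _ _) (by linarith))
          have hφM : φ M < ε + δ₁ - β := by
            by_cases hMε : M < ε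
            · have := hφlt M hMpos
              have hβδ : β ≤ δ₁ := min_le_left _ _
              linarith
            · push_neg at hMε
              have := hcφ₁ M hMε hMlt
              have hβc : β ≤ ε - c := min_le_right _ _
              linarith
          calc dist (x (N + 1)) (x (m + 1)) ≤ max 0 (φ M) := hk
            _ < ε + δ₁ - β := max_lt (by have h' : β ≤ δ₁ := min_le_left _ _; linarith) hφM
        · rw [hk]; have h' : β ≤ δ₁ := min_le_left _ _; linarith
      calc dist (x N) (x (N + (k + 1))) = dist (x N) (x (m + 1)) := by rw [hmdef]; ring_nf
        _ ≤ dist (x N) (x (N + 1)) + dist (x (N + 1)) (x (m + 1)) := dist_triangle _ _ _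
        _ < β + (ε + δ₁ - β) := add_lt_add (hdN N le_rfl) hstep
        _ = ε + δ₁ := by ring
  have claim' : ∀ m, N ≤ m → dist (x N) (x m) < ε + δ₁ := by
    intro m hm
    obtain ⟨k, rfl⟩ := Nat.exists_eq_add_of_le hm
    exact claim k
  refine ⟨N, fun m hm n hn => ?_⟩
  calc dist (x m) (x n) ≤ dist (x m) (x N) + dist (x N) (x n) := dist_triangle _ _ _
    _ < (ε + δ₁) + (ε + δ₁) := by
        rw [dist_comm (x m) (x N)]
        exact add_lt_add (claim' m hm) (claim' n hn)
    _ ≤ ε₀ := by rw [hεdef] at *; linarith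
end

section
/- Let (X,d) be a metric space, x₀ ∈ X, f : X → X with the closure of the orbit O(x₀,f) complete, and φ : (0,∞) → (0,∞) with φ(t) < t and limsup_{s→t⁺} φ(s) < t for all t > 0. Suppose d(f(x),f(y)) ≤ φ(max{ d(x,y), d(x,f(x)), d(y,f(y)) }) for all x ≠ y in the closure of O(x₀,f), and suppose z = lim_{n→∞} fⁿ(x₀) exists. Then z is a fixed point of f; no continuity assumption on f is required. -/
open Filter Function

theorem stmt8 {X : Type*} [MetricSpace X] (f : X → X) (x₀ : X)
    (hcomp : IsComplete (closure (Set.range fun n => f^[n] x₀)))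
    (φ : ℝ → ℝ) (hφpos : ∀ t > (0:ℝ), 0 < φ t)
    (hφlt : ∀ t > (0:ℝ), φ t < t)
    (hφls : ∀ t > (0:ℝ), Filter.limsup φ (nhdsWithin t (Set.Ioi t)) < t)
    (hf : ∀ x ∈ closure (Set.range fun n => f^[n] x₀),
          ∀ y ∈ closure (Set.range fun n => f^[n] x₀), x ≠ y →
      dist (f x) (f y) ≤ φ (max (dist x y) (max (dist x (f x)) (dist y (f y)))))
    (z : X) (hz : Tendsto (fun n => f^[n] x₀) atTop (nhds z)) :
    f z = z := by
  by_cases hcase : ∃ N, ∀ n ≥ N, f^[n] x₀ = z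
  · obtain ⟨N, hN⟩ := hcase
    have h1 := hN N le_rfl
    have h2 := hN (N + 1) (by omega)
    rw [Function.iterate_succ_apply', h1] at h2
    exact h2
  · push_neg at hcase
    by_contra hne
    have hε : 0 < dist z (f z) := dist_pos.mpr (Ne.symm hne)
    set ε := dist z (f z) with hεdef
    have hφε : φ ε < ε := hφlt ε hε
    have hδ : 0 < min (ε / 2) (ε - φ ε) := lt_min (by linarith) (by linarith)
    obtain ⟨N, hN⟩ := Metric.tendsto_atTop.mp hz _ hδ
    obtain ⟨n, hnN, hnz⟩ := hcase N
    have hmem : ∀ m, f^[m] x₀ ∈ closure (Set.range fun k => f^[k] x₀) :=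
      fun m => subset_closure ⟨m, rfl⟩
    have hzmem : z ∈ closure (Set.range fun k => f^[k] x₀) :=
      mem_closure_of_tendsto hz (Filter.Eventually.of_forall fun m => Set.mem_range_self m)
    have h1 := hN n hnN
    have h2 := hN (n + 1) (by omega)
    rw [Function.iterate_succ_apply'] at h2
    have key := hf _ (hmem n) _ hzmem hnz
    have hd1 : dist (f^[n] x₀) z < ε / 2 := lt_of_lt_of_le h1 (min_le_left _ _)
    have hd2 : dist (f (f^[n] x₀)) z < ε / 2 := lt_of_lt_of_le h2 (min_le_left _ _)
    have hd3 : dist (f^[n] x₀) (f (f^[n] x₀)) ≤ ε := by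
      calc dist (f^[n] x₀) (f (f^[n] x₀))
          ≤ dist (f^[n] x₀) z + dist z (f (f^[n] x₀)) := dist_triangle _ _ _
        _ ≤ ε := by rw [dist_comm z]; linarith
    have hmax : max (dist (f^[n] x₀) z)
        (max (dist (f^[n] x₀) (f (f^[n] x₀))) (dist z (f z))) = ε := by
      rw [← hεdef, max_eq_right hd3, max_eq_right (by linarith)]
    rw [hmax] at key
    have h2' : dist (f (f^[n] x₀)) z < ε - φ ε := lt_of_lt_of_le h2 (min_le_right _ _)
    have htri : dist z (f z) ≤ dist z (f (f^[n] x₀)) + dist (f (f^[n] x₀)) (f z) :=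
      dist_triangle _ _ _
    rw [dist_comm z (f (f^[n] x₀))] at htri
    have : ε < ε := by
      calc ε = dist z (f z) := hεdef
        _ ≤ dist (f (f^[n] x₀)) z + dist (f (f^[n] x₀)) (f z) := htri
        _ < (ε - φ ε) + φ ε := add_lt_add_of_lt_of_le h2' key
        _ = ε := by ring
    exact lt_irrefl _ this
end

section
/- Let (X,d) be a metric space, x₀ ∈ X, f : X → X with the closure of the orbit O(x₀,f) complete, and φ : (0,∞) → (0,∞) with φ(t) < t and limsup_{s→t⁺} φ(s) < t for all t > 0. Suppose d(f(x),f(y)) ≤ φ(max{ d(x,y), d(x,f(x)), d(y,f(y)) }) for all x ≠ y in the closure of O(x₀,f). Then f has a unique fixed point in the closure of O(x₀,f). -/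
open Filter Function Topology

theorem stmt9 {X : Type*} [MetricSpace X] (f : X → X) (x₀ : X)
    (hcomp : IsComplete (closure (Set.range fun n => f^[n] x₀)))
    (φ : ℝ → ℝ) (hφpos : ∀ t > (0:ℝ), 0 < φ t)
    (hφlt : ∀ t > (0:ℝ), φ t < t)
    (hφls : ∀ t > (0:ℝ), Filter.limsup φ (nhdsWithin t (Set.Ioi t)) < t)
    (hf : ∀ x ∈ closure (Set.range fun n => f^[n] x₀),
          ∀ y ∈ closure (Set.range fun n => f^[n] x₀), x ≠ y →
      dist (f x) (f y) ≤ φ (max (dist x y) (max (dist x (f x)) (dist y (f y))))) :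
    ∃! z : X, z ∈ closure (Set.range fun n => f^[n] x₀) ∧ f z = z := by
  set S := closure (Set.range fun n => f^[n] x₀) with hSdef
  set x : ℕ → X := fun n => f^[n] x₀ with hxdef
  have hxS : ∀ n, x n ∈ S := fun n => subset_closure ⟨n, rfl⟩
  have hxsucc : ∀ n, x (n + 1) = f (x n) := fun n => Function.iterate_succ_apply' f n x₀
  have huniq : ∀ z ∈ S, f z = z → ∀ w ∈ S, f w = w → z = w := by
    intro z hz hfz w hw hfw
    by_contra hne
    have h := hf z hz w hw hne
    rw [hfz, hfw] at h
    simp only [dist_self, max_self, max_eq_left dist_nonneg] at h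
    have := hφlt (dist z w) (dist_pos.2 hne)
    linarith
  suffices hex : ∃ z ∈ S, f z = z by
    obtain ⟨z, hz, hfz⟩ := hex
    exact ⟨z, ⟨hz, hfz⟩, fun w hw => huniq w hw.1 hw.2 z hz hfz⟩
  by_cases hper : ∃ n, f (x n) = x n
  · obtain ⟨n, hn⟩ := hper
    exact ⟨x n, hxS n, hn⟩
  push_neg at hper
  set c : ℕ → ℝ := fun n => dist (x n) (x (n + 1)) with hcdef
  have hcpos : ∀ n, 0 < c n :=
    fun n => dist_pos.2 fun h => hper n ((hxsucc n).symm.trans h.symm)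
  have hkey : ∀ n, c (n + 1) ≤ φ (c n) ∧ c (n + 1) < c n := by
    intro n
    have hne : x n ≠ x (n + 1) := dist_pos.1 (hcpos n)
    have h0 := hf (x n) (hxS n) (x (n + 1)) (hxS (n + 1)) hne
    rw [← hxsucc n, ← hxsucc (n + 1)] at h0
    have h' : c (n + 1) ≤ φ (max (c n) (max (c n) (c (n + 1)))) := h0
    rcases le_or_gt (c (n + 1)) (c n) with hle | hlt
    · have hm : max (c n) (max (c n) (c (n + 1))) = c n := by
        rw [max_eq_left hle, max_self]
      rw [hm] at h'
      exact ⟨h', lt_of_le_of_lt h' (hφlt _ (hcpos n))⟩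
    · exfalso
      have hm : max (c n) (max (c n) (c (n + 1))) = c (n + 1) := by
        rw [max_eq_right hlt.le, max_eq_right hlt.le]
      rw [hm] at h'
      exact absurd h' (not_le.2 (hφlt _ (hcpos (n + 1))))
  have hanti : StrictAnti c := strictAnti_nat_of_succ_lt fun n => (hkey n).2
  have hc0 : Tendsto c atTop (𝓝 0) := by
    have hbd : BddBelow (Set.range c) := ⟨0, by rintro _ ⟨n, rfl⟩; exact (hcpos n).le⟩
    have hL := tendsto_atTop_ciInf hanti.antitone hbd
    set L := ⨅ n, c n with hLdef
    have hL0 : 0 ≤ L := le_ciInf fun n => (hcpos n).le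
    rcases hL0.eq_or_lt with h0 | hpos
    · rwa [← h0] at hL
    · exfalso
      have hLlt : ∀ n, L < c n := fun n =>
        lt_of_le_of_lt (ciInf_le hbd (n + 1)) (hanti (Nat.lt_succ_self n))
      have hbdd : IsBoundedUnder (· ≤ ·) (𝓝[>] L) φ := by
        refine ⟨L + 1, eventually_map.2 ?_⟩
        filter_upwards [Ioo_mem_nhdsGT_of_mem (Set.left_mem_Ico.2 (lt_add_one L))] with s hs
        exact (hφlt s (hpos.trans hs.1)).le.trans hs.2.le
      have hev : ∀ᶠ s in 𝓝[>] L, φ s < L := eventually_lt_of_limsup_lt (hφls L hpos) hbdd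
      have hcL : Tendsto c atTop (𝓝[>] L) :=
        tendsto_nhdsWithin_of_tendsto_nhds_of_eventually_within _ hL
          (Eventually.of_forall fun n => hLlt n)
      obtain ⟨n, h1, h2⟩ :=
        ((hcL.eventually hev).and (Eventually.of_forall fun n => (hkey n).1)).exists
      exact absurd (h2.trans_lt h1) (not_lt.2 (hLlt (n + 1)).le)
  have hctrl : ∀ ε > (0:ℝ), ∃ δ > (0:ℝ), ∃ b, b < ε ∧ ∀ s, ε ≤ s → s < ε + δ → φ s ≤ b := by
    intro ε hε
    have hbdd : IsBoundedUnder (· ≤ ·) (𝓝[>] ε) φ := by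
      refine ⟨ε + 1, eventually_map.2 ?_⟩
      filter_upwards [Ioo_mem_nhdsGT_of_mem (Set.left_mem_Ico.2 (lt_add_one ε))] with s hs
      exact (hφlt s (hε.trans hs.1)).le.trans hs.2.le
    obtain ⟨b0, hb0, hb0'⟩ := exists_between (hφls ε hε)
    have hev : ∀ᶠ s in 𝓝[>] ε, φ s < b0 := eventually_lt_of_limsup_lt hb0 hbdd
    obtain ⟨u, hu, huI⟩ := mem_nhdsGT_iff_exists_Ioo_subset.1 hev
    refine ⟨u - ε, sub_pos.2 hu, max b0 (φ ε), max_lt hb0' (hφlt ε hε), ?_⟩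
    intro s hs1 hs2
    rcases hs1.eq_or_lt with h | h
    · rw [← h]; exact le_max_right _ _
    · exact (huI ⟨h, by linarith⟩).le.trans (le_max_left _ _)
  have hcauchy : CauchySeq x := by
    rw [Metric.cauchySeq_iff']
    intro ε₀ hε₀
    obtain ⟨δ, hδ, b, hb, hbfar⟩ := hctrl (ε₀ / 2) (by linarith)
    have hpos' : 0 < min δ (min (ε₀ / 2 - b) (ε₀ / 2)) :=
      lt_min hδ (lt_min (by linarith) (by linarith))
    obtain ⟨N, hN⟩ := (hc0.eventually (gt_mem_nhds hpos')).exists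
    have hcN : ∀ m, N ≤ m → c m ≤ c N := fun m hm => hanti.antitone hm
    have key : ∀ m, N ≤ m → dist (x N) (x m) < ε₀ / 2 + c N := by
      intro m hm
      induction m, hm using Nat.le_induction with
      | base =>
        have := hcpos N
        simp only [dist_self]
        linarith
      | succ m hm ih =>
        by_cases heq : x N = x m
        · calc dist (x N) (x (m + 1)) = c m := by rw [heq]
          _ ≤ c N := hcN m hm
          _ < ε₀ / 2 + c N := by linarith
        · have h0 := hf (x N) (hxS N) (x m) (hxS m) heq
          rw [← hxsucc N, ← hxsucc m] at h0
          have h' : dist (x (N + 1)) (x (m + 1)) ≤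
              φ (max (dist (x N) (x m)) (max (c N) (c m))) := h0
          set M := max (dist (x N) (x m)) (max (c N) (c m)) with hMdef
          have hMpos : 0 < M :=
            lt_of_lt_of_le (hcpos N) ((le_max_left _ _).trans (le_max_right _ _))
          have hM2 : M < ε₀ / 2 + c N := by
            apply max_lt ih (max_lt ?_ ?_)
            · linarith [hcpos N]
            · linarith [hcN m hm]
          have htri : dist (x N) (x (m + 1)) ≤ c N + dist (x (N + 1)) (x (m + 1)) :=
            dist_triangle (x N) (x (N + 1)) (x (m + 1))
          rcases lt_or_ge M (ε₀ / 2) with hMlt | hMge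
          · have : φ M < ε₀ / 2 := (hφlt M hMpos).trans hMlt
            have hcNδ : c N < ε₀ / 2 :=
              lt_of_lt_of_le hN ((min_le_right _ _).trans (min_le_right _ _))
            linarith
          · have hcNδ : c N < δ := lt_of_lt_of_le hN (min_le_left _ _)
            have hφM : φ M ≤ b := hbfar M hMge (by linarith)
            have hcNb : c N < ε₀ / 2 - b :=
              lt_of_lt_of_le hN ((min_le_right _ _).trans (min_le_left _ _))
            linarith
    refine ⟨N, fun n hn => ?_⟩
    have hkn := key n hn
    have hcN2 : c N < ε₀ / 2 :=
      lt_of_lt_of_le hN ((min_le_right _ _).trans (min_le_right _ _))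
    calc dist (x n) (x N) = dist (x N) (x n) := dist_comm _ _
      _ < ε₀ / 2 + c N := hkn
      _ < ε₀ := by linarith
  obtain ⟨z, hzS, hlim⟩ := cauchySeq_tendsto_of_isComplete hcomp hxS hcauchy
  refine ⟨z, hzS, ?_⟩
  by_contra hnefix
  have hδ₀ : 0 < dist z (f z) := dist_pos.2 fun h => hnefix h.symm
  have hφδ := hφlt (dist z (f z)) hδ₀
  have hinj : ∀ {n m : ℕ}, n < m → x n ≠ x m := by
    intro n m hnm h
    have h2 : x (n + 1) = x (m + 1) := by rw [hxsucc, hxsucc, h]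
    have hcc : c n = c m := by
      show dist (x n) (x (n + 1)) = dist (x m) (x (m + 1))
      rw [h, h2]
    exact (hanti hnm).ne' hcc
  have hevne : ∀ᶠ n in atTop, x n ≠ z := by
    by_cases hez : ∃ n, x n = z
    · obtain ⟨n₀, h₀⟩ := hez
      filter_upwards [eventually_gt_atTop n₀] with n hn h
      exact hinj hn (h₀.trans h.symm)
    · push_neg at hez
      exact Eventually.of_forall hez
  have h1 : ∀ᶠ n in atTop, dist (x n) z < dist z (f z) :=
    (hlim.eventually (Metric.ball_mem_nhds z hδ₀)).mono fun n h => Metric.mem_ball.1 h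
  have h2 : ∀ᶠ n in atTop, c n < dist z (f z) := hc0.eventually (gt_mem_nhds hδ₀)
  have h3 : ∀ᶠ n in atTop, dist (x (n + 1)) z < dist z (f z) - φ (dist z (f z)) := by
    have := (hlim.comp (tendsto_add_atTop_nat 1)).eventually
      (Metric.ball_mem_nhds z (by linarith : (0:ℝ) < dist z (f z) - φ (dist z (f z))))
    exact this.mono fun n h => Metric.mem_ball.1 h
  obtain ⟨n, hn1, hn2, hn3, hn4⟩ := (h1.and (h2.and (h3.and hevne))).exists
  have hne' : z ≠ x n := fun h => hn4 h.symm
  have h := hf z hzS (x n) (hxS n) hne'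
  rw [← hxsucc n] at h
  have hB : dist (x n) (x (n + 1)) ≤ dist z (f z) := hn2.le
  have hA : dist z (x n) ≤ dist z (f z) := by rw [dist_comm]; exact hn1.le
  rw [max_eq_left hB, max_eq_right hA] at h
  have h' : dist (x (n + 1)) (f z) ≤ φ (dist z (f z)) := by rw [dist_comm]; exact h
  have h3' : dist z (x (n + 1)) < dist z (f z) - φ (dist z (f z)) := by
    rw [dist_comm]; exact hn3
  have htri := dist_triangle z (x (n + 1)) (f z)
  linarith
end

section
/- Let (X,d) be a metric space, f : X → X, z ∈ X, and 0 < a < 1. Suppose d(f(x),f(y)) ≤ max{ d(x,y), a·d(x,f(x)) + (1−a)·d(y,f(y)), (1−a)·d(x,f(x)) + a·d(y,f(y)) } for all x,y in some set S containing z and all iterates fⁿ(x₀) for some x₀ ∈ X, and that fⁿ(x₀) → z. Then d(z,f(z)) ≤ max{a, 1−a}·d(z,f(z)), hence f(z) = z. -/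
open Filter Function

theorem stmt10 {X : Type*} [MetricSpace X] (f : X → X) (z : X)
    (a : ℝ) (ha0 : 0 < a) (ha1 : a < 1)
    (S : Set X) (hzS : z ∈ S) (x₀ : X) (horb : ∀ n : ℕ, f^[n] x₀ ∈ S)
    (hf : ∀ x ∈ S, ∀ y ∈ S,
      dist (f x) (f y) ≤ max (dist x y)
        (max (a * dist x (f x) + (1 - a) * dist y (f y))
             ((1 - a) * dist x (f x) + a * dist y (f y))))
    (hz : Tendsto (fun n => f^[n] x₀) atTop (nhds z)) :
    dist z (f z) ≤ max a (1 - a) * dist z (f z) ∧ f z = z := by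
  set d := dist z (f z) with hd
  have hd0 : 0 ≤ d := dist_nonneg
  have h1 : Tendsto (fun n => f^[n+1] x₀) atTop (nhds z) := by
    exact hz.comp (tendsto_add_atTop_nat 1)
  have key : ∀ n : ℕ, dist (f^[n+1] x₀) (f z) ≤
      max (dist (f^[n] x₀) z)
        (max (a * dist (f^[n] x₀) (f^[n+1] x₀) + (1 - a) * d)
             ((1 - a) * dist (f^[n] x₀) (f^[n+1] x₀) + a * d)) := by
    intro n
    have := hf (f^[n] x₀) (horb n) z hzS
    simpa [Function.iterate_succ_apply'] using this
  -- limits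
  have hL : Tendsto (fun n => dist (f^[n+1] x₀) (f z)) atTop (nhds d) := by
    simpa [dist_comm] using h1.dist (tendsto_const_nhds (x := f z))
  have hdist0 : Tendsto (fun n => dist (f^[n] x₀) z) atTop (nhds 0) := by
    simpa using hz.dist (tendsto_const_nhds (x := z))
  have hstep0 : Tendsto (fun n => dist (f^[n] x₀) (f^[n+1] x₀)) atTop (nhds 0) := by
    simpa using hz.dist h1
  have hR : Tendsto (fun n =>
      max (dist (f^[n] x₀) z)
        (max (a * dist (f^[n] x₀) (f^[n+1] x₀) + (1 - a) * d)
             ((1 - a) * dist (f^[n] x₀) (f^[n+1] x₀) + a * d))) atTop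
      (nhds (max 0 (max ((1 - a) * d) (a * d)))) := by
    have h2 : Tendsto (fun n => a * dist (f^[n] x₀) (f^[n+1] x₀) + (1 - a) * d)
        atTop (nhds ((1 - a) * d)) := by
      have := (hstep0.const_mul a).add (tendsto_const_nhds (x := (1 - a) * d))
      simpa using this
    have h3 : Tendsto (fun n => (1 - a) * dist (f^[n] x₀) (f^[n+1] x₀) + a * d)
        atTop (nhds (a * d)) := by
      have := (hstep0.const_mul (1 - a)).add (tendsto_const_nhds (x := a * d))
      simpa using this
    exact hdist0.max (h2.max h3)
  have hle : d ≤ max 0 (max ((1 - a) * d) (a * d)) :=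
    le_of_tendsto_of_tendsto' hL hR key
  have hle2 : d ≤ max a (1 - a) * d := by
    have h1a : (1 - a) * d ≤ max a (1 - a) * d :=
      mul_le_mul_of_nonneg_right (le_max_right _ _) hd0
    have h2a : a * d ≤ max a (1 - a) * d :=
      mul_le_mul_of_nonneg_right (le_max_left _ _) hd0
    have h0 : (0 : ℝ) ≤ max a (1 - a) * d :=
      mul_nonneg (le_trans ha0.le (le_max_left _ _)) hd0
    calc d ≤ max 0 (max ((1 - a) * d) (a * d)) := hle
      _ ≤ max a (1 - a) * d := by
        apply max_le h0 (max_le h1a h2a)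
  refine ⟨hle2, ?_⟩
  have hm1 : max a (1 - a) < 1 := max_lt ha1 (by linarith)
  have hdz : d = 0 := by nlinarith [hle2, hm1, hd0]
  have : dist (f z) z = 0 := by rw [dist_comm]; exact hdz
  exact dist_eq_zero.mp this
end
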